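/- (Uniqueness of the maximal grade-0 chain when correct votes are compatible.) Let C ⊆ L be finite sets of messages, all of strictly positive weight, with weight(C) > (2/3)·weight(L), and assume that the votes of the messages in C are pairwise compatible. Then any two chains that both have grade 0 at L are compatible; consequently, there is at most one maximal grade-0 chain at L. -/
import Mathlib


open scoped Classical

/-- The weight of the messages in `L` whose vote extends (has as a prefix) the chain `Λ`. -/
noncomputable def extWeight {Msg B : Type*} (w : Msg → ℝ) (vote : Msg → List B)
    (L : Finset Msg) (Λ : List B) : ℝ :=
  ∑ m ∈ L, if Λ <+: vote m then w m else 0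

/-- A chain `Λ` has grade 0 at `L` if the votes for extensions of `Λ` account for strictly
more than one third of the weight of `L`. -/
def Grade0 {Msg B : Type*} (w : Msg → ℝ) (vote : Msg → List B)
    (L : Finset Msg) (Λ : List B) : Prop :=
  (1 / 3 : ℝ) * ∑ m ∈ L, w m < extWeight w vote L Λ

/-- A chain `Λ` is a maximal grade-0 chain at `L` if it has grade 0 at `L` and no strict
extension of it has grade 0 at `L`. -/
def MaximalGrade0 {Msg B : Type*} (w : Msg → ℝ) (vote : Msg → List B)
    (L : Finset Msg) (Λ : List B) : Prop :=
  Grade0 w vote L Λ ∧ ∀ Λ' : List B, Λ <+: Λ' → Λ' ≠ Λ → ¬Grade0 w vote L Λ'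

/-- Uniqueness of the maximal grade-0 chain when correct votes are compatible:
if `C ⊆ L`, `weight C > (2/3) * weight L`, and the votes of messages in `C` are pairwise
compatible, then any two grade-0 chains at `L` are compatible, and there is at most one
maximal grade-0 chain at `L`. -/
theorem unique_maximal_grade0 {Msg B : Type*} [DecidableEq Msg]
    (w : Msg → ℝ) (vote : Msg → List B) (hw : ∀ m : Msg, 0 < w m)
    (C L : Finset Msg) (hCL : C ⊆ L)
    (hC : (2 / 3 : ℝ) * ∑ m ∈ L, w m < ∑ m ∈ C, w m)
    (hcomp : ∀ m ∈ C, ∀ m' ∈ C, vote m <+: vote m' ∨ vote m' <+: vote m) :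
    (∀ Λ Λ' : List B, Grade0 w vote L Λ → Grade0 w vote L Λ' →
      Λ <+: Λ' ∨ Λ' <+: Λ) ∧
    (∀ Λ Λ' : List B, MaximalGrade0 w vote L Λ → MaximalGrade0 w vote L Λ' →
      Λ = Λ') := by
  -- Key: any grade-0 chain has a supporter in C.
  have key : ∀ Λ : List B, Grade0 w vote L Λ → ∃ m ∈ C, Λ <+: vote m := by
    intro Λ hΛ
    by_contra h
    push_neg at h
    have hle : extWeight w vote L Λ ≤ ∑ m ∈ L \ C, w m := by
      rw [extWeight, ← Finset.sum_sdiff hCL]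
      have h1 : ∑ m ∈ C, (if Λ <+: vote m then w m else 0) = 0 := by
        apply Finset.sum_eq_zero
        intro m hm
        simp [h m hm]
      have h2 : ∑ m ∈ L \ C, (if Λ <+: vote m then w m else 0) ≤ ∑ m ∈ L \ C, w m := by
        apply Finset.sum_le_sum
        intro m _
        split
        · exact le_refl _
        · exact (hw m).le
      linarith
    have hsd : ∑ m ∈ L \ C, w m = ∑ m ∈ L, w m - ∑ m ∈ C, w m := by
      rw [eq_sub_iff_add_eq, Finset.sum_sdiff hCL]
    rw [Grade0] at hΛ
    rw [hsd] at hle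
    linarith
  have compat : ∀ Λ Λ' : List B, Grade0 w vote L Λ → Grade0 w vote L Λ' →
      Λ <+: Λ' ∨ Λ' <+: Λ := by
    intro Λ Λ' hΛ hΛ'
    obtain ⟨m, hm, hv⟩ := key Λ hΛ
    obtain ⟨m', hm', hv'⟩ := key Λ' hΛ'
    rcases hcomp m hm m' hm' with h | h
    · exact List.prefix_or_prefix_of_prefix (hv.trans h) hv'
    · exact List.prefix_or_prefix_of_prefix hv (hv'.trans h)
  refine ⟨compat, ?_⟩
  intro Λ Λ' hΛ hΛ'
  rcases compat Λ Λ' hΛ.1 hΛ'.1 with h | h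
  · by_contra hne
    exact hΛ.2 Λ' h (Ne.symm hne) hΛ'.1
  · by_contra hne
    exact hΛ'.2 Λ h hne hΛ.1
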